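/- Let F ∈ H^∞_{m×m} be a normal symbol (F(t) normal for a.e. t on the unit circle). If F is degenerate, i.e., there exists c ∈ ℂ with det(F(t) − cI) ≡ 0 on the unit disc, then the subspace L = {x ∈ H²_m : Fx = cx a.e. on 𝕋} is nonzero, closed, and invariant under both T_F and T_F*; hence T_F is not a pure subnormal operator. -/

import Mathlib

open MeasureTheory Complex Matrix AddCircle
open scoped ComplexInnerProductSpace Real

noncomputable section

local instance : Fact ((0:ℝ) < 2 * Real.pi) := ⟨by positivity⟩

/-- `ℂ^m` with its Euclidean structure. -/
abbrev Ee (m : ℕ) := EuclideanSpace ℂ (Fin m)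

/-- The Hilbert space `L²(𝕋, ℂ^m)`, realized over the circle of circumference `2π`. -/
abbrev L2C (m : ℕ) := Lp (Ee m) 2 (haarAddCircle : Measure (AddCircle (2 * Real.pi)))

/-- The Hardy space `H²_m`: elements whose negative Fourier coefficients vanish. -/
def HardyM (m : ℕ) : Set (L2C m) :=
  {f | ∀ n : ℤ, n < 0 → fourierCoeff (⇑f) n = 0}

/-- Pointwise action of a matrix-valued symbol on a `ℂ^m`-valued function. -/
def matAct {m : ℕ} (G : AddCircle (2 * Real.pi) → Matrix (Fin m) (Fin m) ℂ)
    (f : AddCircle (2 * Real.pi) → Ee m) : AddCircle (2 * Real.pi) → Ee m :=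
  fun t => (WithLp.equiv 2 (Fin m → ℂ)).symm ((G t).mulVec (WithLp.equiv 2 (Fin m → ℂ) (f t)))

/-!
The entries of `F` lie in `H^∞` (apply `T_F` to the constant vectors), and `H^∞` is a ring: for
`n < 0` the `n`-th Fourier coefficient of `f g` is an `L²` pairing of two functions with disjoint
spectra. Modulo null functions, `F - c` is a matrix over the commutative ring `H^∞` with
vanishing determinant, so McCoy's minor argument gives a kernel vector of `F - c` with `H^∞`
entries that is not a.e. zero, i.e. a nonzero `x ∈ L`. For `x ∈ L`, normality of `F(t)` turns `F x = c x` into `F* x = c̄ x`, and `P`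
fixes `H² ⊇ L`, so `T_F` and `T_F*` act on `L` as the commuting scalars `c` and `c̄`.
-/

open scoped ComplexConjugate ComplexOrder

namespace Matrix

variable {R : Type*} [CommRing R]

lemma det_submatrix_equiv_equiv_eq_zero {n p : Type*} [Fintype n] [DecidableEq n] [Fintype p]
    [DecidableEq p] (e₁ e₂ : n ≃ p) {A : Matrix p p R} (hA : A.det = 0) :
    (A.submatrix e₁ e₂).det = 0 := by
  have : A.submatrix e₁ e₂ = (A.submatrix id (e₁.symm.trans e₂)).submatrix e₁ e₁ := by
    ext; simp
  rw [this, det_submatrix_equiv_self, det_permute', hA, mul_zero]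

lemma det_submatrix_snoc_eq_sum {m r : ℕ} (A : Matrix (Fin m) (Fin m) R) (ρ : Fin r → Fin m)
    (i : Fin m) (σ : Fin (r + 1) → Fin m) :
    (A.submatrix (Fin.snoc ρ i) σ).det =
      ∑ l, A i (σ l) * ((-1) ^ (r + (l : ℕ)) * (A.submatrix ρ (σ ∘ l.succAbove)).det) := by
  rw [det_succ_row _ (Fin.last r)]
  refine Finset.sum_congr rfl fun l _ => ?_
  have : (A.submatrix (Fin.snoc ρ i) σ).submatrix (Fin.last r).succAbove l.succAbove =
      A.submatrix ρ (σ ∘ l.succAbove) := by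
    ext; simp [Fin.succAbove_last]
  simp only [this, submatrix_apply, Fin.snoc_last, Fin.val_last]
  ring

lemma mulVec_sum_single_cofactor_eq_zero {m r : ℕ} (A : Matrix (Fin m) (Fin m) R)
    (ρ : Fin r ↪ Fin m) (σ : Fin (r + 1) ↪ Fin m)
    (hminor : ∀ ρ' σ' : Fin (r + 1) ↪ Fin m, (A.submatrix ρ' σ').det = 0) :
    A *ᵥ ∑ l, Pi.single (σ l) ((-1) ^ (r + (l : ℕ)) * (A.submatrix ρ (σ ∘ l.succAbove)).det) =
      0 := by
  ext i
  have hAv : (A *ᵥ ∑ l, Pi.single (σ l)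
      ((-1) ^ (r + (l : ℕ)) * (A.submatrix ρ (σ ∘ l.succAbove)).det)) i =
        (A.submatrix (Fin.snoc ρ i) σ).det := by
    simp [mulVec_sum, mulVec_single, det_submatrix_snoc_eq_sum]
  rw [hAv, Pi.zero_apply]
  by_cases hi : i ∈ Set.range ρ
  · obtain ⟨l, rfl⟩ := hi
    exact det_zero_of_row_eq (Fin.castSucc_lt_last l).ne (by ext; simp)
  · exact hminor ⟨_, Fin.snoc_injective_of_injective ρ.injective hi⟩ σ

/-- McCoy's argument: take a nonvanishing `r × r` minor with `r` maximal and border it by one more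
column; its cofactors along the new row form a kernel vector whose last entry is that minor. -/
theorem exists_mulVec_eq_zero_of_det_eq_zero [Nontrivial R] {m : ℕ}
    (A : Matrix (Fin m) (Fin m) R) (hA : A.det = 0) : ∃ v ≠ 0, A *ᵥ v = 0 := by
  classical
  let HasNonzeroMinor (r : ℕ) : Prop := ∃ ρ σ : Fin r ↪ Fin m, (A.submatrix ρ σ).det ≠ 0
  have h0 : HasNonzeroMinor 0 :=
    ⟨Function.Embedding.ofIsEmpty, Function.Embedding.ofIsEmpty, by simp⟩
  have hm : ¬ HasNonzeroMinor m := fun ⟨ρ, σ, h⟩ =>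
    h (det_submatrix_equiv_equiv_eq_zero (.ofBijective ρ ρ.injective.bijective_of_finite)
      (.ofBijective σ σ.injective.bijective_of_finite) hA)
  set r := Nat.findGreatest HasNonzeroMinor m
  obtain ⟨ρ, σ, hρσ⟩ : HasNonzeroMinor r := Nat.findGreatest_spec (Nat.zero_le m) h0
  have hrm : r < m := (Nat.findGreatest_le m).lt_of_ne fun h => hm (h ▸ ⟨ρ, σ, hρσ⟩)
  have hmax (ρ' σ' : Fin (r + 1) ↪ Fin m) : (A.submatrix ρ' σ').det = 0 := by
    by_contra h
    exact Nat.findGreatest_is_greatest (Nat.lt_succ_self r) hrm ⟨ρ', σ', h⟩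
  obtain ⟨j, hj⟩ : ∃ j, j ∉ Set.range σ := by
    by_contra! h
    have := Fintype.card_le_of_surjective σ fun j => h j
    simp only [Fintype.card_fin] at this
    omega
  let σ' : Fin (r + 1) ↪ Fin m := ⟨Fin.snoc σ j, Fin.snoc_injective_of_injective σ.injective hj⟩
  refine ⟨_, fun hv => hρσ ?_, mulVec_sum_single_cofactor_eq_zero A ρ σ' hmax⟩
  have hσ'_last : σ' ∘ (Fin.last r).succAbove = σ := by
    ext a; simp [σ', Fin.succAbove_last]
  have hvj := congrFun hv j
  rw [Finset.sum_apply, Finset.sum_eq_single (Fin.last r)] at hvj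
  · simpa [σ', hσ'_last, ← two_mul, pow_mul] using hvj
  · intro l _ hl
    obtain ⟨l', rfl⟩ := Fin.exists_castSucc_eq.mpr hl
    exact Pi.single_eq_of_ne (by simpa [σ'] using fun h : j = σ l' => hj ⟨l', h.symm⟩) _
  · simp

section Normal

variable {n : Type*} [Fintype n] [StarRing R] [PartialOrder R] [StarOrderedRing R]
  [NoZeroDivisors R]

lemma conjTranspose_mulVec_eq_zero_of_mulVec_eq_zero
    {N : Matrix n n R} (hN : Nᴴ * N = N * Nᴴ) {v : n → R} (hv : N *ᵥ v = 0) :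
    Nᴴ *ᵥ v = 0 := by
  rw [← dotProduct_star_self_eq_zero, star_mulVec, conjTranspose_conjTranspose,
    ← dotProduct_mulVec, mulVec_mulVec, ← hN, ← mulVec_mulVec, hv, mulVec_zero, dotProduct_zero]

lemma conjTranspose_mulVec_eq_star_smul [DecidableEq n]
    {M : Matrix n n R} (hM : Mᴴ * M = M * Mᴴ) {c : R} {v : n → R} (hv : M *ᵥ v = c • v) :
    Mᴴ *ᵥ v = star c • v := by
  have hc (a : R) (B : Matrix n n R) : Commute (a • 1) B := (Commute.one_left _).smul_left a
  have hN : Commute (M - c • 1)ᴴ (M - c • 1) := by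
    rw [conjTranspose_sub, conjTranspose_smul, conjTranspose_one]
    exact ((Commute.sub_right hM (hc c _).symm).sub_left ((hc _ _).sub_right (hc _ _)))
  have := conjTranspose_mulVec_eq_zero_of_mulVec_eq_zero hN.eq (v := v)
    (by rw [sub_mulVec, smul_mulVec, one_mulVec, hv, sub_self])
  rwa [conjTranspose_sub, conjTranspose_smul, conjTranspose_one, sub_mulVec, smul_mulVec,
    one_mulVec, sub_eq_zero] at this

end Normal

end Matrix

theorem Subring.exists_eventually_mulVec_eq_zero {X R : Type*} [CommRing R] [Nontrivial R]
    {l : Filter X} [l.NeBot] (S : Subring (X → R)) {m : ℕ} (A : X → Matrix (Fin m) (Fin m) R)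
    (hA : ∀ i j, (fun x => A x i j) ∈ S) (hdet : ∀ᶠ x in l, (A x).det = 0) :
    ∃ v : Fin m → X → R, (∀ k, v k ∈ S) ∧ (∀ᶠ x in l, A x *ᵥ (fun k => v k x) = 0) ∧
      ¬ ∀ᶠ x in l, (fun k => v k x) = 0 := by
  -- Work in the image `S'` of `S` in the germs along `l`, where `det = 0` holds exactly.
  let γ := Filter.Germ.coeRingHom (R := R) l
  let M : Matrix (Fin m) (Fin m) (X → R) := .of fun i j x => A x i j
  have hM_det : M.det = fun x => (A x).det := funext fun x =>
    (RingHom.map_det (Pi.evalRingHom _ x) M).trans (congrArg det (by ext; rfl))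
  have hM_mulVec (v : Fin m → X → R) (i : Fin m) :
      (M *ᵥ v) i = fun x => (A x *ᵥ fun k => v k x) i := funext fun x => by
    simp [M, mulVec, dotProduct, Finset.sum_apply]
  let S' := S.map γ
  let B : Matrix (Fin m) (Fin m) S' := fun i j => ⟨γ (M i j), Subring.mem_map.mpr ⟨_, hA i j, rfl⟩⟩
  have hB_map : B.map S'.subtype = M.map γ := rfl
  have hB : B.det = 0 := by
    apply Subtype.val_injective
    rw [← Subring.coe_subtype, RingHom.map_det, RingHom.mapMatrix_apply, hB_map,
      ← RingHom.mapMatrix_apply, ← RingHom.map_det, hM_det, map_zero]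
    exact Filter.Germ.coe_eq.mpr hdet
  obtain ⟨w, hw0, hBw⟩ := B.exists_mulVec_eq_zero_of_det_eq_zero hB
  choose v hvS hv using fun k => Subring.mem_map.mp (w k).2
  have hw : S'.subtype ∘ w = γ ∘ v := funext fun k => (hv k).symm
  refine ⟨v, hvS, ?_, fun h => hw0 (funext fun k => Subtype.val_injective ?_)⟩
  · refine (Filter.eventually_all.mpr fun i => ?_).mono fun x hx => funext hx
    have hi := congrArg S'.subtype (congrFun hBw i)
    rw [RingHom.map_mulVec, hB_map, hw, ← RingHom.map_mulVec, hM_mulVec, Pi.zero_apply,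
      map_zero] at hi
    exact Filter.Germ.coe_eq.mp hi
  · rw [← hv]
    exact Filter.Germ.coe_eq.mpr (h.mono fun x hx => congrFun hx k)

section HInfty

variable {T : ℝ} [Fact (0 < T)]

lemma inner_eq_tsum_fourierCoeff (f g : Lp ℂ 2 (haarAddCircle (T := T))) :
    ⟪f, g⟫ = ∑' k, conj (fourierCoeff f k) * fourierCoeff g k := by
  rw [← fourierBasis.repr.inner_map_map f g, lp.inner_eq_tsum]
  refine tsum_congr fun k => ?_
  rw [RCLike.inner_apply, fourierBasis_repr, fourierBasis_repr, mul_comm]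

lemma fourierCoeff_fourier_mul_conj (f : AddCircle T → ℂ) (n k : ℤ) :
    fourierCoeff (fun t => fourier n t * conj (f t)) k = conj (fourierCoeff f (n - k)) := by
  simp only [fourierCoeff, smul_eq_mul, ← integral_conj, map_mul, ← fourier_neg, neg_neg]
  refine integral_congr_ae (ae_of_all _ fun t => ?_)
  dsimp only
  rw [← mul_assoc, ← fourier_add, neg_add_eq_sub]

/-- For `n < 0`, the `n`-th coefficient of `f * g` is the `L²` pairing of `fourier n * conj f`,
whose spectrum lies in `(-∞, n]`, with `g`, whose spectrum lies in `[0, ∞)`. -/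
lemma fourierCoeff_mul_eq_zero {f g : AddCircle T → ℂ} (hfm : Measurable f) (hgm : Measurable g)
    {Cf Cg : ℝ} (hfC : ∀ t, ‖f t‖ ≤ Cf) (hgC : ∀ t, ‖g t‖ ≤ Cg)
    (hf : ∀ n < 0, fourierCoeff f n = 0) (hg : ∀ n < 0, fourierCoeff g n = 0)
    {n : ℤ} (hn : n < 0) : fourierCoeff (f * g) n = 0 := by
  have hU : MemLp (fun t => fourier n t * conj (f t)) 2 haarAddCircle :=
    MemLp.of_bound ((map_continuous _).measurable.mul
      (continuous_conj.measurable.comp hfm)).aestronglyMeasurable Cf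
      (ae_of_all _ fun t => by
        rw [norm_mul, RCLike.norm_conj, fourier_apply, Circle.norm_coe, one_mul]; exact hfC t)
  have hG : MemLp g 2 haarAddCircle := MemLp.of_bound hgm.aestronglyMeasurable Cg (ae_of_all _ hgC)
  have hcoeff : fourierCoeff (f * g) n = ⟪hU.toLp _, hG.toLp g⟫ := by
    rw [L2.inner_def]
    refine integral_congr_ae ?_
    filter_upwards [hU.coeFn_toLp, hG.coeFn_toLp] with t hUt hGt
    simp only [hUt, hGt, RCLike.inner_apply, map_mul, conj_conj, ← fourier_neg, smul_eq_mul,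
      Pi.mul_apply]
    ring
  rw [hcoeff, inner_eq_tsum_fourierCoeff, fourierCoeff_congr_ae hU.coeFn_toLp,
    fourierCoeff_congr_ae hG.coeFn_toLp]
  refine (tsum_congr fun k => ?_).trans tsum_zero
  rcases lt_or_ge k 0 with hk | hk
  · rw [hg k hk, mul_zero]
  · rw [fourierCoeff_fourier_mul_conj, hf _ (by omega), map_zero, map_zero, zero_mul]

lemma fourierCoeff_const (a : ℂ) {n : ℤ} (hn : n ≠ 0) :
    fourierCoeff (fun _ : AddCircle T => a) n = 0 := by
  have : (fun _ : AddCircle T => a) = fun t => a * fourier 0 t := by simp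
  rw [this, fourierCoeff.const_mul, fourierCoeff_fourier, Pi.single_eq_of_ne hn, mul_zero]

variable (T) in
def hInfty : Subalgebra ℂ (AddCircle T → ℂ) where
  carrier := {g | Measurable g ∧ (∃ C, ∀ t, ‖g t‖ ≤ C) ∧ ∀ n < 0, fourierCoeff g n = 0}
  mul_mem' := fun ⟨hfm, ⟨Cf, hfC⟩, hf⟩ ⟨hgm, ⟨Cg, hgC⟩, hg⟩ =>
    ⟨hfm.mul hgm, ⟨Cf * Cg, fun t => by
      rw [Pi.mul_apply, norm_mul]
      exact mul_le_mul (hfC t) (hgC t) (norm_nonneg _) ((norm_nonneg _).trans (hfC t))⟩,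
      fun _ hn => fourierCoeff_mul_eq_zero hfm hgm hfC hgC hf hg hn⟩
  add_mem' := fun ⟨hfm, ⟨Cf, hfC⟩, hf⟩ ⟨hgm, ⟨Cg, hgC⟩, hg⟩ =>
    ⟨hfm.add hgm, ⟨Cf + Cg, fun t => (norm_add_le _ _).trans (add_le_add (hfC t) (hgC t))⟩,
      fun n hn => by
        rw [fourierCoeff.add (.of_bound hfm.aestronglyMeasurable Cf (ae_of_all _ hfC))
          (.of_bound hgm.aestronglyMeasurable Cg (ae_of_all _ hgC)), Pi.add_apply, hf n hn,
          hg n hn, add_zero]⟩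
  algebraMap_mem' a := ⟨measurable_const, ⟨‖a‖, fun _ => le_rfl⟩,
    fun _ hn => fourierCoeff_const a hn.ne⟩

lemma memLp_of_mem_hInfty {g : AddCircle T → ℂ} (hg : g ∈ hInfty T) (p : ENNReal) :
    MemLp g p haarAddCircle :=
  let ⟨hgm, ⟨C, hC⟩, _⟩ := hg
  MemLp.of_bound hgm.aestronglyMeasurable C (ae_of_all _ hC)

end HInfty

section FourierCoeffLp

variable {T : ℝ} [Fact (0 < T)] {E : Type*}

lemma ContinuousLinearMap.map_fourierCoeff {F : Type*} [NormedAddCommGroup E] [NormedSpace ℂ E]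
    [CompleteSpace E] [NormedAddCommGroup F] [NormedSpace ℂ F] [CompleteSpace F]
    (L : E →L[ℂ] F) {f : AddCircle T → E} (hf : Integrable f haarAddCircle) (n : ℤ) :
    L (fourierCoeff f n) = fourierCoeff (fun t => L (f t)) n := by
  simp only [fourierCoeff, ← L.integral_comp_comm (hf.fourier_smul (-n)), map_smul]

variable [NormedAddCommGroup E] [InnerProductSpace ℂ E] [CompleteSpace E]

variable (T) in
def fourierSmulLp (n : ℤ) (v : E) : Lp E 2 (haarAddCircle (T := T)) :=
  ContinuousMap.toLp 2 haarAddCircle ℂ ⟨fun t => fourier n t • v, by fun_prop⟩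

lemma inner_fourierCoeff (f : Lp E 2 (haarAddCircle (T := T))) (v : E) (n : ℤ) :
    ⟪v, fourierCoeff f n⟫ = ⟪fourierSmulLp T n v, f⟫ := by
  rw [L2.inner_def, fourierCoeff,
    ← integral_inner (((Lp.memLp f).integrable one_le_two).fourier_smul _)]
  refine integral_congr_ae ?_
  filter_upwards [ContinuousMap.coeFn_toLp (p := 2) (𝕜 := ℂ) haarAddCircle
    (⟨fun t => fourier n t • v, by fun_prop⟩ : C(AddCircle T, E))] with t ht
  simp only [fourierSmulLp, ht, ContinuousMap.coe_mk, inner_smul_left, inner_smul_right,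
    fourier_neg]

end FourierCoeffLp

section Hardy

variable {m : ℕ}

lemma mem_hardyM_iff {f : L2C m} :
    f ∈ HardyM m ↔ ∀ i, ∀ n < 0, fourierCoeff (fun t => f t i) n = 0 := by
  have hcomp (n : ℤ) (i : Fin m) : fourierCoeff (⇑f) n i = fourierCoeff (fun t => f t i) n :=
    (EuclideanSpace.proj i).map_fourierCoeff ((Lp.memLp f).integrable one_le_two) n
  refine ⟨fun hf i n hn => ?_, fun hf n hn => ?_⟩
  · rw [← hcomp, hf n hn, PiLp.zero_apply]
  · ext i
    rw [hcomp, hf i n hn, PiLp.zero_apply]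

lemma mem_hardyM_iff_inner {f : L2C m} :
    f ∈ HardyM m ↔ ∀ n < 0, ∀ v : Ee m, ⟪fourierSmulLp (2 * π) n v, f⟫ = 0 := by
  simp only [← inner_fourierCoeff]
  refine ⟨fun hf n hn v => by rw [hf n hn, inner_zero_right], fun hf n hn => ?_⟩
  exact inner_self_eq_zero.mp (hf n hn _)

lemma isClosed_hardyM : IsClosed (HardyM m) := by
  have : HardyM m =
      ⋂ (n : ℤ) (_ : n < 0) (v : Ee m), {f | ⟪fourierSmulLp (2 * π) n v, f⟫ = 0} := by
    ext f
    simp only [Set.mem_iInter]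
    exact mem_hardyM_iff_inner
  rw [this]
  exact isClosed_biInter fun n _ => isClosed_iInter fun v =>
    isClosed_eq (continuous_const.inner continuous_id) continuous_const

lemma sub_mem_hardyM {f g : L2C m} (hf : f ∈ HardyM m) (hg : g ∈ HardyM m) : f - g ∈ HardyM m := by
  rw [mem_hardyM_iff_inner] at hf hg ⊢
  intro n hn v
  rw [inner_sub_right, hf n hn v, hg n hn v, sub_zero]

lemma apply_eq_self_of_mem_hardyM {P : L2C m → L2C m} (hPmem : ∀ f, P f ∈ HardyM m)
    (hPorth : ∀ f, ∀ g ∈ HardyM m, ⟪f - P f, g⟫ = 0) {x : L2C m} (hx : x ∈ HardyM m) :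
    P x = x :=
  (sub_eq_zero.mp (inner_self_eq_zero.mp (hPorth x _ (sub_mem_hardyM hx (hPmem x))))).symm

lemma exists_mem_hardyM_ae_eq {g : Fin m → AddCircle (2 * π) → ℂ}
    (hg : ∀ k, g k ∈ hInfty (2 * π)) :
    ∃ x : L2C m, x ∈ HardyM m ∧ ⇑x =ᵐ[haarAddCircle] fun t => WithLp.toLp 2 fun k => g k t := by
  have hx : MemLp (fun t => WithLp.toLp 2 fun k => g k t : _ → Ee m) 2 haarAddCircle :=
    MemLp.of_eval_piLp fun k => memLp_of_mem_hInfty (hg k) 2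
  refine ⟨hx.toLp _, mem_hardyM_iff.mpr fun k n hn => ?_, hx.coeFn_toLp⟩
  rw [fourierCoeff_congr_ae (hx.coeFn_toLp.mono fun t ht => congrFun (congrArg WithLp.ofLp ht) k)]
  exact (hg k).2.2 n hn

end Hardy

section Symbol

variable {m : ℕ} {G : AddCircle (2 * π) → Matrix (Fin m) (Fin m) ℂ} {M : L2C m →L[ℂ] L2C m}

lemma apply_eq_smul_iff_ae (hM : ∀ f, ⇑(M f) =ᵐ[haarAddCircle] matAct G ⇑f) {c : ℂ}
    {y : L2C m} : M y = c • y ↔ ∀ᵐ t ∂haarAddCircle, G t *ᵥ (y t).ofLp = c • (y t).ofLp := by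
  have hpt (t) : matAct G (⇑y) t = c • y t ↔ G t *ᵥ (y t).ofLp = c • (y t).ofLp :=
    (WithLp.ofLp_injective 2).eq_iff.symm
  rw [Lp.ext_iff]
  constructor
  · intro h
    filter_upwards [h, hM y, Lp.coeFn_smul c y] with t h1 h2 h3
    exact (hpt t).1 (h2.symm.trans (h1.trans h3))
  · intro h
    filter_upwards [h, hM y, Lp.coeFn_smul c y] with t h1 h2 h3
    exact h2.trans (((hpt t).2 h1).trans h3.symm)

lemma entry_mem_hInfty (hGmeas : ∀ i j, Measurable fun t => G t i j) {C : ℝ}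
    (hGbd : ∀ t i j, ‖G t i j‖ ≤ C) (hM : ∀ f, ⇑(M f) =ᵐ[haarAddCircle] matAct G ⇑f)
    (hMH : ∀ f, f ∈ HardyM m → M f ∈ HardyM m) (i j : Fin m) :
    (fun t => G t i j) ∈ hInfty (2 * π) := by
  obtain ⟨e, heH, he⟩ :=
    exists_mem_hardyM_ae_eq (g := fun k => algebraMap ℂ _ ((Pi.single j 1 : Fin m → ℂ) k))
      fun k => Subalgebra.algebraMap_mem _ _
  have hMe : (fun t => M e t i) =ᵐ[haarAddCircle] fun t => G t i j := by
    filter_upwards [hM e, he] with t h1 h2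
    simp [h1, h2, matAct, mulVec_single]
  refine ⟨hGmeas i j, ⟨C, fun t => hGbd t i j⟩, fun n hn => ?_⟩
  rw [← fourierCoeff_congr_ae hMe]
  exact mem_hardyM_iff.mp (hMH e heH) i n hn

lemma exists_ne_zero_mem_hardyM_apply_eq_smul (hG : ∀ i j, (fun t => G t i j) ∈ hInfty (2 * π))
    (hM : ∀ f, ⇑(M f) =ᵐ[haarAddCircle] matAct G ⇑f) {c : ℂ}
    (hdet : ∀ᵐ t ∂haarAddCircle, (G t - c • 1).det = 0) :
    ∃ x : L2C m, (x ∈ HardyM m ∧ M x = c • x) ∧ x ≠ 0 := by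
  obtain ⟨v, hvH, hker, hv0⟩ := (hInfty (2 * π)).toSubring.exists_eventually_mulVec_eq_zero
    (fun t => G t - c • 1) (fun i j => sub_mem (hG i j) (Subalgebra.algebraMap_mem _ _)) hdet
  obtain ⟨x, hxH, hx⟩ := exists_mem_hardyM_ae_eq hvH
  refine ⟨x, ⟨hxH, (apply_eq_smul_iff_ae hM).mpr ?_⟩, fun h => hv0 ?_⟩
  · filter_upwards [hker, hx] with t h1 h2
    rw [sub_mulVec, smul_mulVec, one_mulVec, sub_eq_zero] at h1
    rwa [h2, WithLp.ofLp_toLp]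
  · filter_upwards [hx, h ▸ Lp.coeFn_zero _ 2 _] with t h1 h2
    simpa using (congrArg WithLp.ofLp (h1.symm.trans h2))

end Symbol

/-- If `F ∈ H^∞_{m×m}` is a normal symbol that is degenerate, i.e.
`det (F(t) − cI) ≡ 0` for some constant `c`, then
`L = {x ∈ H²_m : Fx = cx a.e.}` is nonzero, closed, and invariant under both `T_F` and
`T_F*`, and `T_F` restricted to it is normal; hence `T_F` is not pure. -/
theorem degenerate_symbol_not_pure {m : ℕ}
    (F : AddCircle (2 * Real.pi) → Matrix (Fin m) (Fin m) ℂ)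
    (hFmeas : ∀ i j, Measurable fun t => F t i j)
    (hFbd : ∃ C : ℝ, ∀ t i j, ‖F t i j‖ ≤ C)
    (P : L2C m →L[ℂ] L2C m)
    (hPmem : ∀ f : L2C m, P f ∈ HardyM m)
    (hPorth : ∀ f : L2C m, ∀ g ∈ HardyM m, ⟪f - P f, g⟫ = 0)
    (MF MFstar : L2C m →L[ℂ] L2C m)
    (hMF : ∀ f : L2C m, ⇑(MF f) =ᵐ[haarAddCircle] matAct F ⇑f)
    (hMFstar : ∀ f : L2C m, ⇑(MFstar f) =ᵐ[haarAddCircle] matAct (fun t => (F t)ᴴ) ⇑f)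
    -- `F` is analytic: multiplication by `F` preserves the Hardy space:
    (hAnal : ∀ f : L2C m, f ∈ HardyM m → MF f ∈ HardyM m)
    -- `F` is a normal symbol:
    (hNormal : ∀ᵐ t ∂(haarAddCircle : Measure (AddCircle (2 * Real.pi))),
      (F t)ᴴ * F t = F t * (F t)ᴴ)
    -- degeneracy: `det (F(t) − cI) = 0` a.e.:
    (c : ℂ)
    (hdeg : ∀ᵐ t ∂(haarAddCircle : Measure (AddCircle (2 * Real.pi))),
      (F t - c • 1).det = 0) :
    -- `L` is nonzero:
    (∃ x : L2C m, (x ∈ HardyM m ∧ MF x = c • x) ∧ x ≠ 0) ∧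
    -- `L` is closed:
    IsClosed {x : L2C m | x ∈ HardyM m ∧ MF x = c • x} ∧
    -- `L` is invariant under `T_F = P ∘ M_F` and `T_F* = P ∘ M_{F*}`:
    (∀ x : L2C m, x ∈ HardyM m → MF x = c • x →
      (P (MF x) ∈ HardyM m ∧ MF (P (MF x)) = c • P (MF x)) ∧
      (P (MFstar x) ∈ HardyM m ∧ MF (P (MFstar x)) = c • P (MFstar x))) ∧
    -- `T_F` and `T_F*` commute on `L`, so `T_F` is normal on `L` and not pure:
    (∀ x : L2C m, x ∈ HardyM m → MF x = c • x →
      P (MFstar (P (MF x))) = P (MF (P (MFstar x)))) := by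
  obtain ⟨C, hC⟩ := hFbd
  have hMFstar_eq {y : L2C m} (hy : MF y = c • y) : MFstar y = conj c • y := by
    rw [apply_eq_smul_iff_ae hMF] at hy
    rw [apply_eq_smul_iff_ae hMFstar]
    filter_upwards [hy, hNormal] with t h1 h2 using conjTranspose_mulVec_eq_star_smul h2 h1
  have hP {y : L2C m} (hy : y ∈ HardyM m) : P y = y := apply_eq_self_of_mem_hardyM hPmem hPorth hy
  refine ⟨exists_ne_zero_mem_hardyM_apply_eq_smul (entry_mem_hInfty hFmeas hC hMF hAnal) hMF hdeg,
    isClosed_hardyM.inter (isClosed_eq MF.continuous (continuous_const_smul c)),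
    fun y hyH hy => ?_, fun y hyH hy => ?_⟩
  · refine ⟨⟨hPmem _, ?_⟩, hPmem _, ?_⟩ <;>
      simp only [hy, hMFstar_eq hy, map_smul, hP hyH, smul_comm c (conj c)]
  · simp only [hy, hMFstar_eq hy, map_smul, hP hyH, smul_comm c (conj c)]
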